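/- Parallelisation of independent phase rotations: let u₀,...,u_{n-1} ∈ F₂ⁿ be linearly independent binary vectors forming the columns of an invertible matrix U ∈ GL(n,F₂), and let θ₀,...,θ_{n-1} be angles. Then ∏_{i=0}^{n-1} Z_{u_i}^{θ_i} = CX(U)⁻¹ · (∏_{i=0}^{n-1} Z_i^{θ_i}) · CX(U), where Z_i^{θ_i} denotes the single-qubit phase rotation acting on qubit i (i.e., Z_{e_i}^{θ_i} with e_i the i-th standard basis vector). -/

import Mathlib

/-!
All the rotations are diagonal in the computational basis, so they commute and their product is
the diagonal matrix `e ↦ ∏ᵢ exp(2iθᵢ (uᵢ · e))`. Since `uᵢ · e` is bit `i` of `Ue`, this is the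
product `∏ᵢ Z_i^{θᵢ}` of single-qubit rotations with its diagonal re-indexed by `e ↦ Ue`, and
conjugating by the permutation matrix `CX(U)` performs exactly that re-indexing.
-/

open Matrix

/-- Phase rotation operator acting diagonally: `Z_u^θ|e⟩ = exp(i2θ(u·e mod 2))|e⟩`. -/
noncomputable def PR {n : ℕ} (u : Fin n → ZMod 2) (θ : ℝ) :
    Matrix (Fin n → ZMod 2) (Fin n → ZMod 2) ℂ :=
  Matrix.diagonal fun e =>
    Complex.exp (Complex.I * (2 * (θ : ℂ)) * (((∑ i, u i * e i : ZMod 2).val : ℕ) : ℂ))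

/-- The CNOT Clifford operator `CX(U)`, sending basis vector `|e⟩` to `|Ue⟩`. -/
def CXmat {n : ℕ} (U : Matrix (Fin n) (Fin n) (ZMod 2)) :
    Matrix (Fin n → ZMod 2) (Fin n → ZMod 2) ℂ :=
  Matrix.of fun e f => if e = U.mulVec f then 1 else 0

theorem List.prod_ofFn_diagonal {ι R : Type*} [Fintype ι] [DecidableEq ι] [CommSemiring R]
    {m : ℕ} (d : Fin m → ι → R) :
    (List.ofFn fun i => diagonal (d i)).prod = diagonal fun e => ∏ i, d i e := by
  have h := map_list_prod (diagonalRingHom ι R) (List.ofFn d)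
  rw [List.map_ofFn, List.prod_ofFn] at h
  exact h.symm.trans (congrArg diagonal (funext fun e => Finset.prod_apply e _ d))

noncomputable def phaseFactor (θ : ℝ) (b : ZMod 2) : ℂ :=
  Complex.exp (Complex.I * (2 * (θ : ℂ)) * ((b.val : ℕ) : ℂ))

theorem PR_eq_diagonal {n : ℕ} (u : Fin n → ZMod 2) (θ : ℝ) :
    PR u θ = diagonal fun e => phaseFactor θ (u ⬝ᵥ e) :=
  rfl

theorem prod_PR_eq_diagonal {n : ℕ} (u : Fin n → Fin n → ZMod 2) (θ : Fin n → ℝ) :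
    (List.ofFn fun i => PR (u i) (θ i)).prod
      = diagonal fun e => ∏ i, phaseFactor (θ i) (u i ⬝ᵥ e) := by
  simp only [PR_eq_diagonal, List.prod_ofFn_diagonal]

section CXmat

variable {n : ℕ}

theorem CXmat_mul (U V : Matrix (Fin n) (Fin n) (ZMod 2)) :
    CXmat U * CXmat V = CXmat (U * V) := by
  ext e f
  simp [CXmat, mul_apply, mulVec_mulVec]

theorem CXmat_one : CXmat (1 : Matrix (Fin n) (Fin n) (ZMod 2)) = 1 := by
  ext e f
  simp [CXmat, one_apply]

theorem CXmat_inv {U : Matrix (Fin n) (Fin n) (ZMod 2)} (hU : IsUnit U) :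
    (CXmat U)⁻¹ = CXmat U⁻¹ :=
  inv_eq_right_inv <| by
    rw [CXmat_mul, mul_nonsing_inv U ((isUnit_iff_isUnit_det U).mp hU), CXmat_one]

theorem CXmat_mul_diagonal_comp_mulVec (U : Matrix (Fin n) (Fin n) (ZMod 2))
    (d : (Fin n → ZMod 2) → ℂ) :
    CXmat U * diagonal (fun f => d (U *ᵥ f)) = diagonal d * CXmat U := by
  ext e f
  by_cases h : e = U *ᵥ f <;> simp [CXmat, mul_apply, diagonal, h]

theorem CXmat_inv_mul_diagonal_mul_CXmat {U : Matrix (Fin n) (Fin n) (ZMod 2)} (hU : IsUnit U)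
    (d : (Fin n → ZMod 2) → ℂ) :
    (CXmat U)⁻¹ * diagonal d * CXmat U = diagonal fun f => d (U *ᵥ f) := by
  rw [mul_assoc, ← CXmat_mul_diagonal_comp_mulVec, ← mul_assoc, CXmat_inv hU, CXmat_mul,
    nonsing_inv_mul U ((isUnit_iff_isUnit_det U).mp hU), CXmat_one, one_mul]

end CXmat

/-- Parallelisation of independent phase rotations: if the vectors `u i` form the rows of
an invertible binary matrix `U` (so that bit `i` of `Ue` is `u i · e`), then the product
of the phase rotations `Z_{u i}^{θ i}` equals `CX(U)⁻¹ (∏ᵢ Z_i^{θ i}) CX(U)`, where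
`Z_i^{θ i}` is the single-qubit rotation on qubit `i`. -/
theorem phase_rotation_parallelisation {n : ℕ} (u : Fin n → (Fin n → ZMod 2)) (θ : Fin n → ℝ)
    (U : Matrix (Fin n) (Fin n) (ZMod 2)) (hrows : ∀ i, U i = u i) (hU : IsUnit U) :
    (List.ofFn fun i => PR (u i) (θ i)).prod
      = (CXmat U)⁻¹ *
        (List.ofFn fun i => PR (Pi.single i (1 : ZMod 2)) (θ i)).prod *
        CXmat U := by
  have hbit : ∀ i e, u i ⬝ᵥ e = (U *ᵥ e) i := fun i e => by rw [← hrows i]; rfl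
  rw [prod_PR_eq_diagonal, prod_PR_eq_diagonal, CXmat_inv_mul_diagonal_mul_CXmat hU]
  simp only [single_one_dotProduct, hbit]
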